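/- Let g be a complex semisimple Lie algebra, (f,h,e) an sl₂-triple, and decompose g into irreducible sl₂-submodules. If Y is an irreducible sl₂-submodule of g of highest weight μ with highest weight vector y, then the quotient Y/(Y ∩ z(e)) ≅ Y/⟨y⟩, as an sl₂-module via the induced action through ad e, is irreducible of highest weight μ − 1, with highest vector the image of [f, y]. -/

import Mathlib

/-!
With `ψ k = (ad f)^k y`, the vectors `ψ 0, …, ψ μ` are `ad h`-eigenvectors of distinct
weights `μ - 2k` whose span is stable under `e`, `f`, `h`; by irreducibility they form a basis
of `Y`. Hence the images `u k` of `ψ k` in `Y/⟨y⟩` with `1 ≤ k ≤ μ` form a basis, on which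
`ad e` and `ad h + 1` act by explicit formulas; `F` is defined on this basis, and the sl₂
relations are checked on it. Irreducibility: an invariant subspace `W ≠ 0` contains an
eigenvector of `H`, hence (the weights being distinct) some `u k`; `E` moves it down to `u 1`,
and `F` then produces every `u k`, all coefficients being nonzero.
-/

open LieModule Module Submodule Set

namespace Submodule

variable {K V : Type*} [Field K] [AddCommGroup V] [Module K V]

lemma mem_of_apply_eq_smul {W : Submodule K V} {T : End K V} (hW : ∀ w ∈ W, T w ∈ W)
    {x y : V} {a : K} (hx : x ∈ W) (hT : T x = a • y) (ha : a ≠ 0) : y ∈ W := by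
  simpa [hT, smul_smul, inv_mul_cancel₀ ha] using W.smul_mem a⁻¹ (hW x hx)

lemma span_singleton_le_comap_of_apply_eq_smul {T : End K V} {x : V} {a : K}
    (hT : T x = a • x) : K ∙ x ≤ (K ∙ x).comap T := by
  rw [span_singleton_le_iff_mem, mem_comap, hT]
  exact smul_mem _ a (mem_span_singleton_self x)

end Submodule

namespace Module.Basis

variable {K V ι : Type*} [Field K] [AddCommGroup V] [Module K V]

lemma exists_eq_smul_of_hasEigenvector (c : Basis ι K V) {eig : ι → K} (heig : eig.Injective)
    {H : End K V} (hH : ∀ i, H (c i) = eig i • c i) {a : K} {w : V}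
    (hw : H.HasEigenvector a w) : ∃ i, ∃ r : K, w = r • c i := by
  have hcoord : ∀ i, eig i * c.repr w i = a * c.repr w i := by
    intro i
    have hcomp : c.coord i ∘ₗ H = eig i • c.coord i := c.ext fun j ↦ by
      rcases eq_or_ne j i with rfl | hji
      · simp [hH]
      · simp [hH, hji.symm]
    simpa [hw.apply_eq_smul] using (LinearMap.congr_fun hcomp w).symm
  obtain ⟨i₀, hi₀⟩ : ∃ i, c.repr w i ≠ 0 := by
    by_contra! h
    exact hw.2 (c.repr.injective (by ext i; simp [h i]))
  have ha : a = eig i₀ := (mul_right_cancel₀ hi₀ (hcoord i₀)).symm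
  refine ⟨i₀, c.repr w i₀, c.repr.injective ?_⟩
  ext i
  rcases eq_or_ne i i₀ with rfl | hi
  · simp
  · have : c.repr w i = 0 := by
      by_contra hne
      exact hi (heig (ha ▸ mul_right_cancel₀ hne (hcoord i)))
    simp [this, hi.symm]

lemma exists_mem_of_invariant [IsAlgClosed K] [FiniteDimensional K V] (c : Basis ι K V)
    {eig : ι → K} (heig : eig.Injective) {H : End K V} (hH : ∀ i, H (c i) = eig i • c i)
    {W : Submodule K V} (hW : ∀ w ∈ W, H w ∈ W) (hW₀ : W ≠ ⊥) : ∃ i, c i ∈ W := by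
  have : Nontrivial W := W.nontrivial_iff_ne_bot.mpr hW₀
  obtain ⟨a, ha⟩ := End.exists_eigenvalue (H.restrict hW)
  obtain ⟨w, hw⟩ := ha.exists_hasEigenvector
  have hw' : H.HasEigenvector a w := by
    refine ⟨End.mem_eigenspace_iff.mpr ?_, by simpa using hw.2⟩
    simpa using congrArg Subtype.val hw.apply_eq_smul
  obtain ⟨i, r, hr⟩ := c.exists_eq_smul_of_hasEigenvector heig hH hw'
  have hr₀ : r ≠ 0 := by rintro rfl; exact hw'.2 (by simp [hr])
  exact ⟨i, by simpa [hr, smul_smul, inv_mul_cancel₀ hr₀] using W.smul_mem r⁻¹ w.2⟩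

lemma exists_quotient_basis_succ {n : ℕ} (b : Basis (Fin (n + 1)) K V) :
    ∃ c : Basis (Fin n) K (V ⧸ K ∙ b 0), ∀ j : Fin n,
      c j = Submodule.Quotient.mk (b j.succ) := by
  have hspan : ⊤ ≤ span K (range fun j : Fin n ↦ (K ∙ b 0).mkQ (b j.succ)) := by
    have : span K (range ((K ∙ b 0).mkQ ∘ b)) = ⊤ := by
      rw [range_comp, ← map_span, b.span_eq, Submodule.map_top, range_mkQ]
    have h₀ : (K ∙ b 0).mkQ (b 0) = 0 := (Quotient.mk_eq_zero _).mpr (mem_span_singleton_self _)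
    rw [← this, ← Fin.cons_self_tail ((K ∙ b 0).mkQ ∘ b), Fin.range_cons]
    simp only [Function.comp_apply, h₀, span_insert_zero]
    rfl
  have hcard : Fintype.card (Fin n) = finrank K (V ⧸ K ∙ b 0) := by
    have := Module.Finite.of_basis b
    have := (K ∙ b 0).finrank_quotient_add_finrank
    rw [finrank_span_singleton (b.ne_zero 0), finrank_eq_card_basis b] at this
    simp at this ⊢
    omega
  exact ⟨basisOfTopLeSpanOfCardEqFinrank _ hspan hcard, fun j ↦ by simp⟩

end Module.Basis

section

variable {R L M : Type*} [CommRing R] [LieRing L] [LieAlgebra R L]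
  [AddCommGroup M] [Module R M] [LieRingModule L M] [LieModule R L M]

lemma LieModule.lie_mem_span_range {ι : Type*} {x : L} {v : ι → M}
    (hv : ∀ i, ⁅x, v i⁆ ∈ span R (range v)) {z : M} (hz : z ∈ span R (range v)) :
    ⁅x, z⁆ ∈ span R (range v) :=
  (span_le (p := (span R (range v)).comap (toEnd R L M x)).mpr (range_subset_iff.mpr hv)) hz

lemma LieModule.pow_toEnd_apply_mem {Y : Submodule R M} {x : L} (hY : ∀ z ∈ Y, ⁅x, z⁆ ∈ Y)
    {m : M} (hm : m ∈ Y) (k : ℕ) : (toEnd R L M x ^ k) m ∈ Y := by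
  induction k with
  | zero => simpa using hm
  | succ k ih => simpa [pow_succ'] using hY _ ih

namespace IsSl2Triple.HasPrimitiveVectorWith

variable {h e f : L} {t : IsSl2Triple h e f} {m : M} {μ : R}

lemma span_range_pow_toEnd_f_eq (P : t.HasPrimitiveVectorWith m μ) {Y : Submodule R M}
    (hm : m ∈ Y) (hYf : ∀ z ∈ Y, ⁅f, z⁆ ∈ Y)
    (hY : ∀ W : Submodule R M, W ≤ Y → (∀ z ∈ W, ⁅e, z⁆ ∈ W) → (∀ z ∈ W, ⁅f, z⁆ ∈ W) →
      (∀ z ∈ W, ⁅h, z⁆ ∈ W) → W = ⊥ ∨ W = Y) :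
    span R (range fun k : ℕ ↦ (toEnd R L M f ^ k) m) = Y := by
  refine (hY _ ?_ (fun z ↦ lie_mem_span_range ?_) (fun z ↦ lie_mem_span_range ?_)
    (fun z ↦ lie_mem_span_range ?_)).resolve_left ?_
  · exact span_le.mpr (range_subset_iff.mpr (pow_toEnd_apply_mem hYf hm))
  · rintro (_ | k)
    · simp [P.lie_e]
    · rw [P.lie_e_pow_succ_toEnd_f]
      exact smul_mem _ _ (subset_span ⟨k, rfl⟩)
  · exact fun k ↦ subset_span ⟨k + 1, (P.lie_f_pow_toEnd_f k).symm⟩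
  · exact fun k ↦ P.lie_h_pow_toEnd_f k ▸ smul_mem _ _ (subset_span ⟨k, rfl⟩)
  · exact (Submodule.ne_bot_iff _).mpr ⟨m, subset_span ⟨0, by simp⟩, P.ne_zero⟩

end IsSl2Triple.HasPrimitiveVectorWith

end

namespace IsSl2Triple.HasPrimitiveVectorWith

variable {K L M : Type*} [Field K] [CharZero K] [LieRing L] [LieAlgebra K L]
  [AddCommGroup M] [Module K M] [LieRingModule L M] [LieModule K L M]
  {h e f : L} {t : IsSl2Triple h e f} {m : M} {μ : ℕ}

lemma pow_toEnd_f_eq_zero_of_lt [FiniteDimensional K M] (P : t.HasPrimitiveVectorWith m (μ : K))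
    {k : ℕ} (hk : μ < k) : (toEnd K L M f ^ k) m = 0 := by
  obtain ⟨j, rfl⟩ := Nat.exists_eq_add_of_le hk
  rw [add_comm, pow_add, End.mul_apply, P.pow_toEnd_f_eq_zero_of_eq_nat rfl, map_zero]

lemma linearIndependent_pow_toEnd_f (P : t.HasPrimitiveVectorWith m (μ : K)) :
    LinearIndependent K fun i : Fin (μ + 1) ↦ (toEnd K L M f ^ (i : ℕ)) m :=
  (toEnd K L M h).eigenvectors_linearIndependent' (fun i : Fin (μ + 1) ↦ (μ : K) - 2 * i)
    (fun i j hij ↦ Fin.ext <| by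
      exact_mod_cast mul_left_cancel₀ two_ne_zero (sub_right_injective hij))
    _ fun i ↦ ⟨End.mem_eigenspace_iff.mpr (P.lie_h_pow_toEnd_f i),
      P.pow_toEnd_f_ne_zero_of_eq_nat rfl (Nat.lt_succ_iff.mp i.2)⟩

lemma exists_basis_pow_toEnd_f [FiniteDimensional K M] (P : t.HasPrimitiveVectorWith m (μ : K))
    {Y : Submodule K M} (hY : span K (range fun k : ℕ ↦ (toEnd K L M f ^ k) m) = Y) :
    ∃ b : Basis (Fin (μ + 1)) K Y, ∀ i, (b i : M) = (toEnd K L M f ^ (i : ℕ)) m := by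
  have hspan : span K (range fun i : Fin (μ + 1) ↦ (toEnd K L M f ^ (i : ℕ)) m) = Y := by
    refine hY ▸ le_antisymm (span_mono (range_subset_iff.mpr fun i ↦ ⟨i, rfl⟩))
      (span_le.mpr ?_)
    rintro _ ⟨k, rfl⟩
    rcases le_or_gt k μ with hk | hk
    · exact subset_span ⟨⟨k, Nat.lt_succ_of_le hk⟩, rfl⟩
    · simp [P.pow_toEnd_f_eq_zero_of_lt hk]
  exact ⟨(Basis.span P.linearIndependent_pow_toEnd_f).map (LinearEquiv.ofEq _ _ hspan),
    fun i ↦ by simp [Basis.span_apply]⟩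

lemma exists_basis_quotient_pow_toEnd_f [FiniteDimensional K M]
    (P : t.HasPrimitiveVectorWith m (μ : K)) {Y : Submodule K M} (hm : m ∈ Y)
    (hYf : ∀ z ∈ Y, ⁅f, z⁆ ∈ Y) (hY : span K (range fun k : ℕ ↦ (toEnd K L M f ^ k) m) = Y) :
    ∃ c : Basis (Fin μ) K (Y ⧸ K ∙ (⟨m, hm⟩ : Y)), ∀ j : Fin μ, c j =
      Submodule.Quotient.mk ⟨(toEnd K L M f ^ ((j : ℕ) + 1)) m, pow_toEnd_apply_mem hYf hm _⟩ := by
  obtain ⟨b, hb⟩ := P.exists_basis_pow_toEnd_f hY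
  have hb₀ : b 0 = ⟨m, hm⟩ := Subtype.ext (by simp [hb])
  obtain ⟨c, hc⟩ := hb₀ ▸ b.exists_quotient_basis_succ
  exact ⟨c, fun j ↦ (hc j).trans (congrArg _ (Subtype.ext (hb _)))⟩

end IsSl2Triple.HasPrimitiveVectorWith

section StringOperators

-- `u k` models the image of `(ad f)^k y` in `Y/⟨y⟩`. The coefficient `k/(k+1)` of `F` is what
-- makes `⁅E, F⁆ = H` hold; `ad f` itself does not preserve `⟨y⟩`.

variable {K Q : Type*} [Field K] [AddCommGroup Q] [Module K Q] {u : ℕ → Q} {μ : K}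
  {E H F : End K Q}

lemma exists_end_apply_eq_div_smul_succ {n : ℕ} (c : Basis (Fin n) K Q)
    (hc : ∀ j : Fin n, c j = u (j + 1)) (hu₀ : u 0 = 0) (hu : ∀ k, n < k → u k = 0) :
    ∃ F : End K Q, ∀ k : ℕ, F (u k) = ((k : K) / (k + 1)) • u (k + 1) := by
  refine ⟨c.constr K fun j ↦ (((j : K) + 1) / (j + 2)) • u (j + 2), fun k ↦ ?_⟩
  rcases k with _ | k
  · simp [hu₀]
  rcases lt_or_ge k n with hk | hk
  · rw [← hc ⟨k, hk⟩, c.constr_basis]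
    push_cast
    ring_nf
  · simp [hu (k + 1) (by omega), hu (k + 2) (by omega)]

variable [CharZero K]
  (hH : ∀ k : ℕ, H (u k) = (μ - 2 * k + 1) • u k)
  (hE : ∀ k : ℕ, E (u (k + 1)) = ((k + 1) * (μ - k)) • u k)
  (hF : ∀ k : ℕ, F (u k) = ((k : K) / (k + 1)) • u (k + 1))
include hH hE hF

lemma sl2_relations_of_apply (hu : span K (range fun k ↦ u (k + 1)) = ⊤) :
    H * E - E * H = 2 • E ∧ H * F - F * H = -(2 • F) ∧ E * F - F * E = H := by
  refine ⟨LinearMap.ext_on_range hu fun k ↦ ?_, LinearMap.ext_on_range hu fun k ↦ ?_,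
    LinearMap.ext_on_range hu fun k ↦ ?_⟩ <;>
  · have h₁ : (k : K) + 1 ≠ 0 := Nat.cast_add_one_ne_zero k
    have h₂ : (k : K) + 1 + 1 ≠ 0 := by exact_mod_cast Nat.succ_ne_zero (k + 1)
    simp only [LinearMap.sub_apply, End.mul_apply, LinearMap.smul_apply,
      LinearMap.neg_apply, map_smul, hH, hE, hF, smul_smul]
    match_scalars
    field_simp
    ring

lemma eq_bot_or_eq_top_of_sl2_invariant [IsAlgClosed K] {n : ℕ} (hμ : μ = n)
    (c : Basis (Fin n) K Q) (hc : ∀ j : Fin n, c j = u (j + 1)) {W : Submodule K Q}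
    (hWE : ∀ w ∈ W, E w ∈ W) (hWH : ∀ w ∈ W, H w ∈ W) (hWF : ∀ w ∈ W, F w ∈ W) :
    W = ⊥ ∨ W = ⊤ := by
  refine or_iff_not_imp_left.mpr fun hW₀ ↦ ?_
  have : FiniteDimensional K Q := Module.Finite.of_basis c
  obtain ⟨i, hi⟩ := c.exists_mem_of_invariant (eig := fun j : Fin n ↦ μ - 2 * (j + 1) + 1)
    (fun i j hij ↦ Fin.ext (by simpa using hij)) (fun j ↦ hc j ▸ by simpa using hH (j + 1))
    hWH hW₀
  have lower : ∀ k < n, u (k + 1) ∈ W → u 1 ∈ W := by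
    intro k
    induction k with
    | zero => exact fun _ h ↦ h
    | succ k ih =>
      refine fun hk hmem ↦ ih (by omega) (mem_of_apply_eq_smul hWE hmem (hE _) ?_)
      have : (k : K) + 1 ≠ n := by exact_mod_cast (show k + 1 ≠ n by omega)
      rw [hμ]
      exact mul_ne_zero (Nat.cast_add_one_ne_zero _)
        (sub_ne_zero.mpr (by exact_mod_cast this.symm))
  have raise : ∀ k, u (k + 1) ∈ W := by
    intro k
    induction k with
    | zero => exact lower i i.2 (hc i ▸ hi)
    | succ k ih =>
      refine mem_of_apply_eq_smul hWF ih (hF _) (div_ne_zero ?_ (Nat.cast_add_one_ne_zero _))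
      exact_mod_cast Nat.succ_ne_zero k
  rw [eq_top_iff, ← c.span_eq, span_le]
  rintro _ ⟨j, rfl⟩
  exact hc j ▸ raise j

end StringOperators

theorem quotient_of_irreducible_component_is_irreducible_general
    {g : Type*} [LieRing g] [LieAlgebra ℂ g]
    [FiniteDimensional ℂ g] {h e f : g} (t : IsSl2Triple h e f)
    (Y : Submodule ℂ g)
    (hYe : ∀ z ∈ Y, ⁅e, z⁆ ∈ Y) (hYf : ∀ z ∈ Y, ⁅f, z⁆ ∈ Y) (hYh : ∀ z ∈ Y, ⁅h, z⁆ ∈ Y)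
    (hirr : Y ≠ ⊥ ∧ ∀ W : Submodule ℂ g, W ≤ Y → (∀ z ∈ W, ⁅e, z⁆ ∈ W) →
      (∀ z ∈ W, ⁅f, z⁆ ∈ W) → (∀ z ∈ W, ⁅h, z⁆ ∈ W) → W = ⊥ ∨ W = Y)
    (μ : ℕ) (hμ : 0 < μ) (y : g) (hy : y ∈ Y) (hy0 : y ≠ 0)
    (hey : ⁅e, y⁆ = 0) (hhy : ⁅h, y⁆ = (μ : ℂ) • y) :
    ∃ E' H' F' : Module.End ℂ (Y ⧸ Submodule.span ℂ {(⟨y, hy⟩ : Y)}),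
      (∀ z : Y, E' (Submodule.Quotient.mk z) =
        Submodule.Quotient.mk (⟨⁅e, (z : g)⁆, hYe (z : g) z.2⟩ : Y)) ∧
      (∀ z : Y, H' (Submodule.Quotient.mk z) =
        Submodule.Quotient.mk (⟨⁅h, (z : g)⁆, hYh (z : g) z.2⟩ : Y) +
          Submodule.Quotient.mk z) ∧
      H' * E' - E' * H' = 2 • E' ∧ H' * F' - F' * H' = -(2 • F') ∧
      E' * F' - F' * E' = H' ∧
      (Submodule.Quotient.mk (⟨⁅f, y⁆, hYf y hy⟩ : Y) :
        Y ⧸ Submodule.span ℂ {(⟨y, hy⟩ : Y)}) ≠ 0 ∧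
      E' (Submodule.Quotient.mk (⟨⁅f, y⁆, hYf y hy⟩ : Y)) = 0 ∧
      H' (Submodule.Quotient.mk (⟨⁅f, y⁆, hYf y hy⟩ : Y)) =
        ((μ : ℂ) - 1) • Submodule.Quotient.mk (⟨⁅f, y⁆, hYf y hy⟩ : Y) ∧
      ∀ W : Submodule ℂ (Y ⧸ Submodule.span ℂ {(⟨y, hy⟩ : Y)}),
        (∀ w ∈ W, E' w ∈ W) → (∀ w ∈ W, H' w ∈ W) → (∀ w ∈ W, F' w ∈ W) →
          W = ⊥ ∨ W = ⊤ := by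
  have P : t.HasPrimitiveVectorWith y (μ : ℂ) := ⟨hy0, hhy, hey⟩
  set S := ℂ ∙ (⟨y, hy⟩ : Y)
  let u : ℕ → Y ⧸ S := fun k ↦
    Submodule.Quotient.mk ⟨(toEnd ℂ g g f ^ k) y, pow_toEnd_apply_mem hYf hy k⟩
  obtain ⟨c, hc⟩ : ∃ c : Basis (Fin μ) ℂ (Y ⧸ S), ∀ j : Fin μ, c j = u (j + 1) :=
    P.exists_basis_quotient_pow_toEnd_f hy hYf (P.span_range_pow_toEnd_f_eq hy hYf hirr.2)
  let E' := S.mapQ S ((toEnd ℂ g g e).restrict hYe)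
    (span_singleton_le_comap_of_apply_eq_smul (Subtype.ext (hey.trans (zero_smul ℂ y).symm)))
  let H' := S.mapQ S ((toEnd ℂ g g h).restrict hYh)
    (span_singleton_le_comap_of_apply_eq_smul (Subtype.ext hhy)) + 1
  have hE : ∀ k : ℕ, E' (u (k + 1)) = ((k + 1) * ((μ : ℂ) - k)) • u k := fun k ↦ by
    rw [← Quotient.mk_smul]
    exact congrArg _ (Subtype.ext (P.lie_e_pow_succ_toEnd_f k))
  have hH : ∀ k : ℕ, H' (u k) = ((μ : ℂ) - 2 * k + 1) • u k := fun k ↦ by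
    rw [add_smul, one_smul, ← Quotient.mk_smul]
    exact congrArg (· + u k) (congrArg _ (Subtype.ext (P.lie_h_pow_toEnd_f k)))
  have hu₀ : u 0 = 0 := (Quotient.mk_eq_zero S).mpr (by simp [S, mem_span_singleton_self])
  obtain ⟨F', hF'⟩ := exists_end_apply_eq_div_smul_succ c hc hu₀
    fun k hk ↦ by simp [u, P.pow_toEnd_f_eq_zero_of_lt hk]; exact zero_mem S
  have hu₁ : (Submodule.Quotient.mk ⟨⁅f, y⁆, hYf y hy⟩ : Y ⧸ S) = u 1 := by simp [u]
  have hspan : span ℂ (range fun k ↦ u (k + 1)) = ⊤ :=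
    eq_top_iff.mpr (c.span_eq ▸ span_mono (range_subset_iff.mpr fun j ↦ ⟨j, (hc j).symm⟩))
  obtain ⟨hHE, hHF, hEF⟩ := sl2_relations_of_apply hH hE hF' hspan
  refine ⟨E', H', F', fun z ↦ rfl, fun z ↦ rfl, hHE, hHF, hEF, ?_, ?_, ?_,
    fun W ↦ eq_bot_or_eq_top_of_sl2_invariant hH hE hF' rfl c hc⟩
  · simpa [hu₁, ← hc ⟨0, hμ⟩] using c.ne_zero ⟨0, hμ⟩
  · simpa [hu₁, hu₀] using hE 0
  · rw [hu₁, hH]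
    congr 1
    ring

/-- For an irreducible sl₂-submodule `Y ⊆ g` of highest weight `μ`
with highest vector `y`, the quotient `Y/⟨y⟩` (raising operator induced by `ad e`,
Cartan element acting as `ad h + 1`) is irreducible of highest weight `μ − 1`
with highest vector the image of `[f, y]`. -/
theorem quotient_of_irreducible_component_is_irreducible
    {g : Type*} [LieRing g] [LieAlgebra ℂ g] [LieAlgebra.IsSemisimple ℂ g]
    [FiniteDimensional ℂ g] {h e f : g} (t : IsSl2Triple h e f)
    (Y : Submodule ℂ g)
    (hYe : ∀ z ∈ Y, ⁅e, z⁆ ∈ Y) (hYf : ∀ z ∈ Y, ⁅f, z⁆ ∈ Y) (hYh : ∀ z ∈ Y, ⁅h, z⁆ ∈ Y)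
    (hirr : Y ≠ ⊥ ∧ ∀ W : Submodule ℂ g, W ≤ Y → (∀ z ∈ W, ⁅e, z⁆ ∈ W) →
      (∀ z ∈ W, ⁅f, z⁆ ∈ W) → (∀ z ∈ W, ⁅h, z⁆ ∈ W) → W = ⊥ ∨ W = Y)
    (μ : ℕ) (hμ : 0 < μ) (y : g) (hy : y ∈ Y) (hy0 : y ≠ 0)
    (hey : ⁅e, y⁆ = 0) (hhy : ⁅h, y⁆ = (μ : ℂ) • y) :
    ∃ E' H' F' : Module.End ℂ (Y ⧸ Submodule.span ℂ {(⟨y, hy⟩ : Y)}),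
      (∀ z : Y, E' (Submodule.Quotient.mk z) =
        Submodule.Quotient.mk (⟨⁅e, (z : g)⁆, hYe (z : g) z.2⟩ : Y)) ∧
      (∀ z : Y, H' (Submodule.Quotient.mk z) =
        Submodule.Quotient.mk (⟨⁅h, (z : g)⁆, hYh (z : g) z.2⟩ : Y) +
          Submodule.Quotient.mk z) ∧
      H' * E' - E' * H' = 2 • E' ∧ H' * F' - F' * H' = -(2 • F') ∧
      E' * F' - F' * E' = H' ∧
      (Submodule.Quotient.mk (⟨⁅f, y⁆, hYf y hy⟩ : Y) :
        Y ⧸ Submodule.span ℂ {(⟨y, hy⟩ : Y)}) ≠ 0 ∧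
      E' (Submodule.Quotient.mk (⟨⁅f, y⁆, hYf y hy⟩ : Y)) = 0 ∧
      H' (Submodule.Quotient.mk (⟨⁅f, y⁆, hYf y hy⟩ : Y)) =
        ((μ : ℂ) - 1) • Submodule.Quotient.mk (⟨⁅f, y⁆, hYf y hy⟩ : Y) ∧
      ∀ W : Submodule ℂ (Y ⧸ Submodule.span ℂ {(⟨y, hy⟩ : Y)}),
        (∀ w ∈ W, E' w ∈ W) → (∀ w ∈ W, H' w ∈ W) → (∀ w ∈ W, F' w ∈ W) →
          W = ⊥ ∨ W = ⊤ :=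
  quotient_of_irreducible_component_is_irreducible_general t Y hYe hYf hYh hirr μ hμ y hy hy0 hey
    hhy
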